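/- Let n_1 and n_2 be coprime Carmichael numbers, both of even index (class A), and suppose the product n = n_1 n_2 is a Carmichael number. If min{v_2(n_1 − 1), v_2(n_2 − 1)} = max{v_2(λ(n_1)), v_2(λ(n_2))} and v_2(n_1 − 1) ≠ v_2(n_2 − 1), then n has odd index, and moreover not all prime factors p of n have v_2(p − 1) = v_2(λ(n)) (i.e., n is in class B1). -/

import Mathlib

/-!
Say `v₂(n₁ - 1) < v₂(n₂ - 1)`. From `n₁ n₂ - 1 = (n₁ - 1) + n₁ (n₂ - 1)` we get
`v₂(n₁ n₂ - 1) = v₂(n₁ - 1)`, while `λ(n₁ n₂) = lcm(λ(n₁), λ(n₂))` has 2-adic valuation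
`max{v₂ λ(n₁), v₂ λ(n₂)} = v₂(n₁ - 1)`; hence the index of `n₁ n₂` is odd. A prime `p ∣ n₁`
has `p - 1 ∣ λ(n₁)`, and `v₂ λ(n₁) < v₂(n₁ - 1)` because `n₁` has even index, so
`v₂(p - 1) < v₂ λ(n₁ n₂)`.
-/

open scoped Classical

/-- The Carmichael lambda function: the least `ℓ > 0` with `a ^ ℓ ≡ 1 (mod n)`
for all `a` coprime to `n`. -/
noncomputable def carmichaelLambda (n : ℕ) : ℕ :=
  sInf {ℓ : ℕ | 0 < ℓ ∧ ∀ a : ℕ, Nat.Coprime a n → a ^ ℓ ≡ 1 [MOD n]}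

/-- A Carmichael number: a composite `n` with `a ^ (n-1) ≡ 1 (mod n)`
for all `a` coprime to `n`. -/
def IsCarmichael (n : ℕ) : Prop :=
  1 < n ∧ ¬ n.Prime ∧ ∀ a : ℕ, Nat.Coprime a n → a ^ (n - 1) ≡ 1 [MOD n]

/-- The Euler liars for `n`, as residues in `{0, …, n-1}` coprime to `n` with
`(a/n) ≡ a ^ ((n-1)/2) (mod n)`. -/
noncomputable def eulerLiars (n : ℕ) : Finset ℕ :=
  (Finset.range n).filter
    (fun a => Nat.Coprime a n ∧ (jacobiSym (a : ℤ) n ≡ (a : ℤ) ^ ((n - 1) / 2) [ZMOD n]))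

open ArithmeticFunction

section padicValNat

variable {p : ℕ} [Fact p.Prime]

lemma padicValNat_le_of_dvd {a b : ℕ} (hb : b ≠ 0) (h : a ∣ b) :
    padicValNat p a ≤ padicValNat p b :=
  (padicValNat_dvd_iff_le hb).mp (pow_padicValNat_dvd.trans h)

lemma padicValNat_lcm {a b : ℕ} (ha : a ≠ 0) (hb : b ≠ 0) :
    padicValNat p (Nat.lcm a b) = max (padicValNat p a) (padicValNat p b) := by
  simp only [← Nat.factorization_def _ Fact.out, Nat.factorization_lcm ha hb, Finsupp.sup_apply]

lemma padicValNat_add_of_lt {a b : ℕ} (ha : a ≠ 0) (h : padicValNat p a < padicValNat p b) :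
    padicValNat p (a + b) = padicValNat p a := by
  have hb : b ≠ 0 := by rintro rfl; simp at h
  have hab : a + b ≠ 0 := by omega
  have hpow_b : p ^ (padicValNat p a + 1) ∣ b := (padicValNat_dvd_iff_le hb).mpr h
  refine le_antisymm ?_ ((padicValNat_dvd_iff_le hab).mp
    (dvd_add pow_padicValNat_dvd ((pow_dvd_pow p (Nat.le_succ _)).trans hpow_b)))
  by_contra! hlt
  exact pow_succ_padicValNat_not_dvd ha
    ((Nat.dvd_add_left hpow_b).mp ((padicValNat_dvd_iff_le hab).mpr hlt))

lemma padicValNat_mul_sub_one_of_lt {a b : ℕ} (ha : 1 < a)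
    (h : padicValNat p (a - 1) < padicValNat p (b - 1)) :
    padicValNat p (a * b - 1) = padicValNat p (a - 1) := by
  have hb : b - 1 ≠ 0 := by intro hb; simp [hb] at h
  have hsplit : a * b - 1 = (a - 1) + a * (b - 1) := by
    obtain ⟨c, rfl⟩ : ∃ c, b = c + 1 := ⟨b - 1, by omega⟩
    rw [Nat.add_sub_cancel, mul_add, mul_one]
    omega
  rw [hsplit, padicValNat_add_of_lt (by omega)]
  exact h.trans_le (padicValNat_le_of_dvd (by positivity) (dvd_mul_left _ _))

lemma even_div_iff_padicValNat_two_lt {m d : ℕ} (hm : m ≠ 0) (hd : d ∣ m) :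
    Even (m / d) ↔ padicValNat 2 d < padicValNat 2 m := by
  have hq : m / d ≠ 0 := (Nat.div_ne_zero_iff_of_dvd hd).mpr ⟨hm, ne_zero_of_dvd_ne_zero hm hd⟩
  rw [even_iff_two_dvd, dvd_iff_padicValNat_ne_zero hq, padicValNat.div_of_dvd hd]
  omega

end padicValNat

lemma carmichael_prime {p : ℕ} (hp : p.Prime) : carmichael p = p - 1 := by
  have := Fact.mk hp
  rw [carmichael_eq_exponent hp.ne_zero, IsCyclic.exponent_eq_card, Nat.card_eq_fintype_card,
    ZMod.card_units]

lemma forall_coprime_pow_modEq_one_iff_forall_units_pow_eq_one (n ℓ : ℕ) [NeZero n] :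
    (∀ a : ℕ, a.Coprime n → a ^ ℓ ≡ 1 [MOD n]) ↔ ∀ u : (ZMod n)ˣ, u ^ ℓ = 1 := by
  simp only [← ZMod.natCast_eq_natCast_iff, Nat.cast_pow, Nat.cast_one]
  refine ⟨fun h u => Units.ext ?_, fun h a ha => ?_⟩
  · simpa using h _ (ZMod.val_coe_unit_coprime u)
  · simpa using congrArg Units.val (h (ZMod.unitOfCoprime a ha))

lemma forall_coprime_pow_modEq_one_iff_carmichael_dvd {n : ℕ} (hn : n ≠ 0) (ℓ : ℕ) :
    (∀ a : ℕ, a.Coprime n → a ^ ℓ ≡ 1 [MOD n]) ↔ carmichael n ∣ ℓ := by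
  have := NeZero.mk hn
  rw [forall_coprime_pow_modEq_one_iff_forall_units_pow_eq_one, carmichael_eq_exponent hn,
    Monoid.exponent_dvd_iff_forall_pow_eq_one]

lemma carmichael_pos {n : ℕ} (hn : n ≠ 0) : 0 < carmichael n :=
  Nat.pos_of_dvd_of_pos (carmichael_dvd_totient n) (Nat.totient_pos.mpr (Nat.pos_of_ne_zero hn))

lemma carmichaelLambda_eq_carmichael {n : ℕ} (hn : n ≠ 0) : carmichaelLambda n = carmichael n := by
  refine IsLeast.csInf_eq ⟨⟨carmichael_pos hn,
    (forall_coprime_pow_modEq_one_iff_carmichael_dvd hn _).mpr dvd_rfl⟩, fun ℓ ⟨hℓ, hpow⟩ => ?_⟩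
  exact Nat.le_of_dvd hℓ ((forall_coprime_pow_modEq_one_iff_carmichael_dvd hn ℓ).mp hpow)

lemma carmichaelLambda_ne_zero {n : ℕ} (hn : n ≠ 0) : carmichaelLambda n ≠ 0 := by
  rw [carmichaelLambda_eq_carmichael hn]
  exact (carmichael_pos hn).ne'

lemma carmichaelLambda_mul {n₁ n₂ : ℕ} (h₁ : n₁ ≠ 0) (h₂ : n₂ ≠ 0) (hcop : n₁.Coprime n₂) :
    carmichaelLambda (n₁ * n₂) = Nat.lcm (carmichaelLambda n₁) (carmichaelLambda n₂) := by
  rw [carmichaelLambda_eq_carmichael h₁, carmichaelLambda_eq_carmichael h₂,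
    carmichaelLambda_eq_carmichael (mul_ne_zero h₁ h₂), carmichael_mul hcop]

lemma sub_one_dvd_carmichaelLambda {n p : ℕ} (hn : n ≠ 0) (hp : p.Prime) (hpn : p ∣ n) :
    p - 1 ∣ carmichaelLambda n := by
  rw [carmichaelLambda_eq_carmichael hn, ← carmichael_prime hp]
  exact carmichael_dvd hpn

namespace IsCarmichael

variable {n : ℕ} (hn : IsCarmichael n)
include hn

lemma ne_zero : n ≠ 0 := by
  have := hn.1
  omega

lemma carmichaelLambda_dvd_sub_one : carmichaelLambda n ∣ n - 1 := by
  rw [carmichaelLambda_eq_carmichael hn.ne_zero,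
    ← forall_coprime_pow_modEq_one_iff_carmichael_dvd hn.ne_zero]
  exact hn.2.2

lemma even_index_iff :
    Even ((n - 1) / carmichaelLambda n) ↔
      padicValNat 2 (carmichaelLambda n) < padicValNat 2 (n - 1) :=
  even_div_iff_padicValNat_two_lt (by have := hn.1; omega) hn.carmichaelLambda_dvd_sub_one

end IsCarmichael

/-- If `n₁, n₂` are coprime class-A Carmichael numbers whose product is a Carmichael
number, `min{v₂(n₁-1), v₂(n₂-1)} = max{v₂(λ(n₁)), v₂(λ(n₂))}` and
`v₂(n₁-1) ≠ v₂(n₂-1)`, then the product has odd index and not all of its prime factors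
`p` satisfy `v₂(p-1) = v₂(λ(n₁n₂))` (i.e. the product is in class B1). -/
theorem product_classB1_of_classA (n₁ n₂ : ℕ)
    (hc₁ : IsCarmichael n₁) (hc₂ : IsCarmichael n₂) (hcop : Nat.Coprime n₁ n₂)
    (he₁ : Even ((n₁ - 1) / carmichaelLambda n₁))
    (he₂ : Even ((n₂ - 1) / carmichaelLambda n₂))
    (hn : IsCarmichael (n₁ * n₂))
    (hv : min (padicValNat 2 (n₁ - 1)) (padicValNat 2 (n₂ - 1)) =
      max (padicValNat 2 (carmichaelLambda n₁)) (padicValNat 2 (carmichaelLambda n₂)))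
    (hne : padicValNat 2 (n₁ - 1) ≠ padicValNat 2 (n₂ - 1)) :
    Odd ((n₁ * n₂ - 1) / carmichaelLambda (n₁ * n₂)) ∧
    ¬ (∀ p ∈ (n₁ * n₂).primeFactors,
        padicValNat 2 (p - 1) = padicValNat 2 (carmichaelLambda (n₁ * n₂))) := by
  wlog hlt : padicValNat 2 (n₁ - 1) < padicValNat 2 (n₂ - 1) generalizing n₁ n₂
  · have h := this n₂ n₁ hc₂ hc₁ hcop.symm he₂ he₁ (mul_comm n₁ n₂ ▸ hn)
      (by rwa [min_comm, max_comm]) hne.symm (by omega)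
    rwa [mul_comm n₂] at h
  have h₁ := hc₁.ne_zero
  have h₂ := hc₂.ne_zero
  have hlam : padicValNat 2 (carmichaelLambda (n₁ * n₂)) = padicValNat 2 (n₁ - 1) := by
    rw [carmichaelLambda_mul h₁ h₂ hcop, padicValNat_lcm (carmichaelLambda_ne_zero h₁)
      (carmichaelLambda_ne_zero h₂), ← hv, min_eq_left hlt.le]
  have hsub : padicValNat 2 (n₁ * n₂ - 1) = padicValNat 2 (n₁ - 1) :=
    padicValNat_mul_sub_one_of_lt hc₁.1 hlt
  refine ⟨?_, fun hall => ?_⟩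
  · rw [← Nat.not_even_iff_odd, hn.even_index_iff]
    omega
  · obtain ⟨p, hp, hpn₁⟩ := Nat.exists_prime_and_dvd hc₁.1.ne'
    have hp_le := padicValNat_le_of_dvd (p := 2) (carmichaelLambda_ne_zero h₁)
      (sub_one_dvd_carmichaelLambda h₁ hp hpn₁)
    have hp_eq := hall p (Nat.mem_primeFactors.mpr ⟨hp, hpn₁.mul_right n₂, mul_ne_zero h₁ h₂⟩)
    have := hc₁.even_index_iff.mp he₁
    omega
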